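/- Let α > 0 and β > −1 be real numbers, and define f(x) = (α + βx)/(1 − e^{−x}) + x for x > 0. Then f is quasi-convex on (0, ∞), i.e., every sublevel set {x ∈ (0, ∞) : f(x) ≤ c} is convex (an interval). -/

import Mathlib

/-!
Write `u = 1 - e^{-x}`. Then `f' = g / u²` with `g = u² + βu - (α + βx)e^{-x}`, and
`g' = e^{-x} p` with `p = 2u + α + βx`. The function `p` is concave with `p 0 = α > 0`, so once
it is `≤ 0` it stays `≤ 0`; hence `-g` has a derivative that can only change sign from `-` to `+`,
i.e. `g` is quasiconcave on `(0, ∞)`. As `g → 1 + β > 0` at infinity, quasiconcavity forces `g`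
to stay `≥ 0` once it is `≥ 0`. So `f'` too changes sign at most once, from `-` to `+`, and a
differentiable function whose derivative behaves like that is quasiconvex.
-/

open Real Set Filter Topology

theorem quasiconvexOn_of_hasDerivAt_of_nonneg_imp {s : Set ℝ} {f f' : ℝ → ℝ} (hs : Convex ℝ s)
    (hf : ∀ x ∈ s, HasDerivAt f (f' x) x)
    (hf' : ∀ x ∈ s, ∀ y ∈ s, x ≤ y → 0 ≤ f' x → 0 ≤ f' y) : QuasiconvexOn ℝ s f := by
  have hIcc : ∀ {a b}, a ∈ s → b ∈ s → Icc a b ⊆ s := fun ha hb => hs.ordConnected.out ha hb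
  have hcont : ∀ {a b}, a ∈ s → b ∈ s → ContinuousOn f (Icc a b) := fun ha hb x hx =>
    (hf x (hIcc ha hb hx)).continuousAt.continuousWithinAt
  have hderiv : ∀ {a b}, a ∈ s → b ∈ s → ∀ x ∈ interior (Icc a b),
      HasDerivWithinAt f (f' x) (interior (Icc a b)) x := fun ha hb x hx =>
    (hf x (hIcc ha hb (interior_subset hx))).hasDerivWithinAt
  refine fun c => convex_iff_ordConnected.2 ⟨fun a ha b hb z hz => ⟨hIcc ha.1 hb.1 hz, ?_⟩⟩
  have hzs := hIcc ha.1 hb.1 hz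
  by_cases hz' : 0 ≤ f' z
  · have hmono : MonotoneOn f (Icc z b) :=
      monotoneOn_of_hasDerivWithinAt_nonneg (convex_Icc z b) (hcont hzs hb.1) (hderiv hzs hb.1)
        fun x hx => by
          rw [interior_Icc] at hx
          exact hf' z hzs x (hIcc hzs hb.1 (Ioo_subset_Icc_self hx)) hx.1.le hz'
    exact (hmono (left_mem_Icc.2 hz.2) (right_mem_Icc.2 hz.2) hz.2).trans hb.2
  · have hanti : AntitoneOn f (Icc a z) :=
      antitoneOn_of_hasDerivWithinAt_nonpos (convex_Icc a z) (hcont ha.1 hzs) (hderiv ha.1 hzs)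
        fun x hx => by
          rw [interior_Icc] at hx
          exact le_of_not_ge fun hx' =>
            hz' (hf' x (hIcc ha.1 hzs (Ioo_subset_Icc_self hx)) z hzs hx.2.le hx')
    exact (hanti (left_mem_Icc.2 hz.1) (right_mem_Icc.2 hz.1) hz.1).trans ha.2

noncomputable def delay (α β x : ℝ) : ℝ := (α + β * x) / (1 - exp (-x)) + x

noncomputable def delayNum (α β x : ℝ) : ℝ :=
  (1 - exp (-x)) ^ 2 + β * (1 - exp (-x)) - (α + β * x) * exp (-x)

noncomputable def delayNumDerivFactor (α β x : ℝ) : ℝ := 2 * (1 - exp (-x)) + α + β * x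

theorem hasDerivAt_one_sub_exp_neg (x : ℝ) :
    HasDerivAt (fun x => 1 - exp (-x)) (exp (-x)) x := by
  simpa using ((hasDerivAt_neg x).exp).const_sub 1

theorem concaveOn_delayNumDerivFactor (α β : ℝ) : ConcaveOn ℝ univ (delayNumDerivFactor α β) := by
  have hexp : ConvexOn ℝ univ (fun x : ℝ => exp (-x)) :=
    convexOn_exp.comp_linearMap (-LinearMap.id)
  refine (((hexp.neg.smul zero_le_two).add ((LinearMap.lsmul ℝ ℝ β).concaveOn convex_univ)).add
    (concaveOn_const (2 + α) convex_univ)).congr fun x _ => ?_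
  simp [delayNumDerivFactor]
  ring

theorem delayNumDerivFactor_nonpos_of_le {α β x y : ℝ} (hα : 0 < α) (hx : 0 ≤ x) (hxy : x ≤ y)
    (h : delayNumDerivFactor α β x ≤ 0) : delayNumDerivFactor α β y ≤ 0 := by
  by_contra! hy
  have hmin := (concaveOn_delayNumDerivFactor α β).min_le_of_mem_Icc (mem_univ 0) (mem_univ y)
    ⟨hx, hxy⟩
  have h0 : delayNumDerivFactor α β 0 = α := by simp [delayNumDerivFactor]
  rw [h0] at hmin
  exact h.not_gt ((lt_min hα hy).trans_le hmin)

theorem hasDerivAt_delayNum (α β x : ℝ) :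
    HasDerivAt (delayNum α β) (exp (-x) * delayNumDerivFactor α β x) x := by
  have he : HasDerivAt (fun x => exp (-x)) (-exp (-x)) x := by
    simpa using (hasDerivAt_neg x).exp
  have hu := hasDerivAt_one_sub_exp_neg x
  have hl : HasDerivAt (fun x => α + β * x) β x := by
    simpa using ((hasDerivAt_id x).const_mul β).const_add α
  refine (((hu.pow 2).add (hu.const_mul β)).sub (hl.mul he)).congr_deriv ?_
  simp only [delayNumDerivFactor]
  ring

theorem quasiconcaveOn_delayNum {α β : ℝ} (hα : 0 < α) :
    QuasiconcaveOn ℝ (Ioi 0) (delayNum α β) := by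
  have h := quasiconvexOn_of_hasDerivAt_of_nonneg_imp (convex_Ioi 0)
    (fun x _ => (hasDerivAt_delayNum α β x).neg) fun x hx y _ hxy h => by
      have hp := delayNumDerivFactor_nonpos_of_le hα (le_of_lt hx) hxy
        (nonpos_of_mul_nonpos_right (neg_nonneg.1 h) (exp_pos _))
      exact neg_nonneg.2 (mul_nonpos_of_nonneg_of_nonpos (exp_pos _).le hp)
  simpa [Function.comp_def] using h.antitone_comp (g := Neg.neg) fun _ _ => neg_le_neg

theorem tendsto_delayNum_atTop (α β : ℝ) :
    Tendsto (delayNum α β) atTop (𝓝 (1 + β)) := by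
  have he : Tendsto (fun x : ℝ => exp (-x)) atTop (𝓝 0) := tendsto_exp_neg_atTop_nhds_zero
  have hxe : Tendsto (fun x : ℝ => x * exp (-x)) atTop (𝓝 0) := by
    simpa using tendsto_pow_mul_exp_neg_atTop_nhds_zero 1
  have hu : Tendsto (fun x : ℝ => 1 - exp (-x)) atTop (𝓝 (1 - 0)) := tendsto_const_nhds.sub he
  have h := ((hu.pow 2).add (hu.const_mul β)).sub ((he.const_mul α).add (hxe.const_mul β))
  convert h using 1
  · funext x; simp only [delayNum]; ring
  · norm_num

theorem delayNum_nonneg_of_le {α β x y : ℝ} (hα : 0 < α) (hβ : -1 < β) (hx : 0 < x)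
    (hxy : x ≤ y) (h : 0 ≤ delayNum α β x) : 0 ≤ delayNum α β y := by
  obtain ⟨z, hz, hyz⟩ := ((tendsto_delayNum_atTop α β).eventually
    (eventually_ge_nhds (neg_lt_iff_pos_add'.1 hβ))).and (eventually_ge_atTop y) |>.exists
  exact ((quasiconcaveOn_delayNum hα 0).ordConnected.out ⟨hx, h⟩
    ⟨hx.trans_le (hxy.trans hyz), hz⟩ ⟨hxy, hyz⟩).2

theorem hasDerivAt_delay (α β : ℝ) {x : ℝ} (hx : x ≠ 0) :
    HasDerivAt (delay α β) (delayNum α β x / (1 - exp (-x)) ^ 2) x := by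
  have hl : HasDerivAt (fun x => α + β * x) β x := by
    simpa using ((hasDerivAt_id x).const_mul β).const_add α
  have hu0 : 1 - exp (-x) ≠ 0 := by
    rw [sub_ne_zero, ne_comm, Ne, exp_eq_one_iff, neg_eq_zero]
    exact hx
  refine ((hl.div (hasDerivAt_one_sub_exp_neg x) hu0).add (hasDerivAt_id x)).congr_deriv ?_
  simp only [delayNum]
  field_simp
  ring

/-- For `α > 0` and `β > -1`, the function `f(x) = (α + βx)/(1 - e^{-x}) + x` is
quasi-convex on `(0, ∞)`. -/
theorem stmt_6 (α β : ℝ) (hα : 0 < α) (hβ : -1 < β) :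
    QuasiconvexOn ℝ (Set.Ioi (0 : ℝ))
      (fun x => (α + β * x) / (1 - Real.exp (-x)) + x) := by
  refine quasiconvexOn_of_hasDerivAt_of_nonneg_imp (convex_Ioi 0)
    (fun x hx => hasDerivAt_delay α β (ne_of_gt hx)) fun x hx y _ hxy h => ?_
  have hpos : 0 < (1 - exp (-x)) ^ 2 :=
    pow_pos (sub_pos.2 (exp_lt_one_iff.2 (neg_neg_of_pos hx))) 2
  exact div_nonneg (delayNum_nonneg_of_le hα hβ hx hxy (by simpa using (le_div_iff₀ hpos).1 h))
    (sq_nonneg _)
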